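/- Let m and ℓ̃ be integers with m ≥ 1 and 0 ≤ ℓ̃ ≤ m. Then the polar coefficient c_m^F(−1, ℓ̃) defined by the SL(2,ℤ) continued-fraction sum equals Σ_{r≥1} (2r + ℓ̃)·d(m − r² − rℓ̃) (a finite sum, since d vanishes below −1; explicitly the sum runs over 1 ≤ r ≤ ⌊(−ℓ̃ + √(ℓ̃² + 4m + 4))/2⌋). -/

import Mathlib

/-- `d n`: the coefficient of `q^(n+1)` in `∏ (1 - q^j)^{-24}`, i.e. the number of
24-tuples of integer partitions whose sizes sum to `n+1` (and `0` for `n < -1`). -/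
def dcoef (n : ℤ) : ℤ :=
  if 0 ≤ n + 1 then
    ∑ v ∈ Finset.Nat.antidiagonalTuple 24 (n + 1).toNat,
      ∏ i, (Fintype.card (Nat.Partition (v i)) : ℤ)
  else 0

/-- The polar coefficient `c_m^F(ñ, ℓ̃)`, given by the `SL(2,ℤ)` continued-fraction sum
over quadruples `(p, q, r, s)` with `ps - qr = 1`, `r, s > 0` and
`0 ≤ ℓ̃/(2m) - q/s < 1/(rs)`; only finitely many terms are nonzero. -/
noncomputable def polarCoef (m nt ℓt : ℤ) : ℤ :=
  ∑ᶠ (p : ℤ) (q : ℤ) (r : ℤ) (s : ℤ),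
    if p * s - q * r = 1 ∧ 0 < r ∧ 0 < s ∧
        0 ≤ (ℓt : ℚ) / (2 * m) - (q : ℚ) / s ∧
        (ℓt : ℚ) / (2 * m) - (q : ℚ) / s < 1 / ((r : ℚ) * s) then
      (-2 * r * s * nt - 2 * p * q * m + (p * s + q * r) * ℓt) *
        dcoef (r ^ 2 * nt + p ^ 2 * m - p * r * ℓt) *
        dcoef (s ^ 2 * nt + q ^ 2 * m - q * s * ℓt)
    else 0

/-!
In integers the window condition `0 ≤ ℓ̃/(2m) - q/s < 1/(rs)` reads `2mq ≤ ℓ̃s` and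
`(ℓ̃s - 2mq)r < 2m`. For `ñ = -1` the second factor `d(-s² + q²m - qsℓ̃)` then vanishes as soon
as `q > 0`, since `qsℓ̃ ≥ 2mq²` bounds its argument by `-mq² - s² ≤ -2`. A negative `q` violates
the second inequality, so only `q = 0` survives, and then `ps = 1` forces `p = s = 1`. For the
quadruple `(1, 0, r, 1)` the second factor is `d(-1) = 1`, and the remaining condition `rℓ̃ < 2m`
may be dropped because otherwise `d(m - r² - rℓ̃)` vanishes as well.
-/

lemma dcoef_neg_one : dcoef (-1) = 1 := by
  simp [dcoef, Finset.Nat.antidiagonalTuple_zero_right]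

lemma dcoef_of_lt_neg_one {n : ℤ} (h : n < -1) : dcoef n = 0 := by
  rw [dcoef, if_neg]; omega

lemma window_iff {m ℓt q r s : ℤ} (hm : 0 < m) (hr : 0 < r) (hs : 0 < s) :
    (0 ≤ (ℓt : ℚ) / (2 * m) - (q : ℚ) / s ∧ (ℓt : ℚ) / (2 * m) - (q : ℚ) / s < 1 / ((r : ℚ) * s)) ↔
      2 * m * q ≤ ℓt * s ∧ (ℓt * s - 2 * m * q) * r < 2 * m := by
  have hs' : (0 : ℚ) < s := by exact_mod_cast hs
  have hdiff : (ℓt : ℚ) / (2 * m) - (q : ℚ) / s = ((ℓt * s - 2 * m * q : ℤ) : ℚ) / (2 * m * s) := by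
    push_cast; field_simp
  rw [hdiff, le_div_iff₀ (by positivity), div_lt_div_iff₀ (by positivity) (by positivity), zero_mul,
    one_mul, ← mul_assoc, mul_lt_mul_iff_left₀ hs']
  norm_cast
  constructor <;> rintro ⟨hnum, hlt⟩ <;> exact ⟨by linarith, hlt⟩

def polarTerm (m nt ℓt p q r s : ℤ) : ℤ :=
  if p * s - q * r = 1 ∧ 0 < r ∧ 0 < s ∧
      0 ≤ (ℓt : ℚ) / (2 * m) - (q : ℚ) / s ∧
      (ℓt : ℚ) / (2 * m) - (q : ℚ) / s < 1 / ((r : ℚ) * s) then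
    (-2 * r * s * nt - 2 * p * q * m + (p * s + q * r) * ℓt) *
      dcoef (r ^ 2 * nt + p ^ 2 * m - p * r * ℓt) *
      dcoef (s ^ 2 * nt + q ^ 2 * m - q * s * ℓt)
  else 0

lemma polarCoef_eq_finsum_polarTerm (m nt ℓt : ℤ) :
    polarCoef m nt ℓt = ∑ᶠ (p : ℤ) (q : ℤ) (r : ℤ) (s : ℤ), polarTerm m nt ℓt p q r s :=
  rfl

lemma polarTerm_neg_one {m ℓt : ℤ} (hm : 0 < m) (hℓt : 0 ≤ ℓt) (p q r s : ℤ) :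
    polarTerm m (-1) ℓt p q r s =
      if p = 1 ∧ q = 0 ∧ s = 1 then
        (if 1 ≤ r then (2 * r + ℓt) * dcoef (m - r ^ 2 - r * ℓt) else 0)
      else 0 := by
  rcases le_or_gt r 0 with hr | hr
  · simp [polarTerm, hr.not_gt, show ¬ 1 ≤ r by omega]
  rcases le_or_gt s 0 with hs | hs
  · simp [polarTerm, hs.not_gt, show s ≠ 1 by omega]
  rw [polarTerm]
  simp only [window_iff hm hr hs]
  rcases lt_trichotomy q 0 with hq | rfl | hq
  · have hgap : 2 * m ≤ ℓt * s - 2 * m * q := by nlinarith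
    have hfar : ¬ (ℓt * s - 2 * m * q) * r < 2 * m := by nlinarith
    rw [if_neg (by tauto), if_neg (by omega)]
  · by_cases hps : p = 1 ∧ s = 1
    · obtain ⟨rfl, rfl⟩ := hps
      by_cases hwin : ℓt * r < 2 * m
      · rw [if_pos (by refine ⟨by ring, hr, one_pos, by omega, by linarith⟩), if_pos (by simp),
          if_pos (by omega)]
        rw [show (1 : ℤ) ^ 2 * -1 + 0 ^ 2 * m - 0 * 1 * ℓt = -1 by ring, dcoef_neg_one]
        ring_nf
      · have hvanish : m - r ^ 2 - r * ℓt < -1 := by nlinarith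
        rw [if_neg (by rintro ⟨-, -, -, -, h⟩; exact hwin (by linarith)), if_pos (by simp),
          if_pos (by omega), dcoef_of_lt_neg_one hvanish, mul_zero]
    · have hps' : p * s ≠ 1 := fun h =>
        hps ⟨Int.eq_one_of_mul_eq_one_right (by nlinarith) h, Int.eq_one_of_mul_eq_one_left hs.le h⟩
      rw [if_neg (by rintro ⟨h, -⟩; exact hps' (by linarith)), if_neg (by tauto)]
  · rw [if_neg (show ¬(p = 1 ∧ q = 0 ∧ s = 1) by omega)]
    split_ifs with hcond
    · have hvanish : s ^ 2 * -1 + q ^ 2 * m - q * s * ℓt < -1 := by nlinarith [hcond.2.2.2.1]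
      rw [dcoef_of_lt_neg_one hvanish, mul_zero]
    · rfl

theorem stmt13_general (m ℓt : ℤ) (hm : 1 ≤ m) (hℓ0 : 0 ≤ ℓt) :
    polarCoef m (-1) ℓt =
      ∑ᶠ r : ℤ, if 1 ≤ r then (2 * r + ℓt) * dcoef (m - r ^ 2 - r * ℓt) else 0 := by
  simp_rw [polarCoef_eq_finsum_polarTerm, polarTerm_neg_one (by omega : 0 < m) hℓ0]
  rw [finsum_eq_single _ 1 fun p hp => by simp [hp], finsum_eq_single _ 0 fun q hq => by simp [hq]]
  refine finsum_congr fun r => ?_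
  rw [finsum_eq_single _ 1 fun s hs => by simp [hs]]
  simp

theorem stmt13 (m ℓt : ℤ) (hm : 1 ≤ m) (hℓ0 : 0 ≤ ℓt) (hℓm : ℓt ≤ m) :
    polarCoef m (-1) ℓt =
      ∑ᶠ r : ℤ, if 1 ≤ r then (2 * r + ℓt) * dcoef (m - r ^ 2 - r * ℓt) else 0 :=
  stmt13_general m ℓt hm hℓ0
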